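/- Let (D_i, Γⁱ)_{i∈ℕ} be a parametrix possessing complex of pre-Hilbert A-modules, with pseudoinverses g_i and projections p_i. Then for each i ≥ 1 the module of boundaries is Rng D_{i-1} = Ker D_i ∩ Ker p_i; in particular Rng D_{i-1} is a closed subspace of Γⁱ, being the intersection of kernels of continuous maps. -/

import Mathlib

/-!
A harmonic element `q` (one with `Δ q = 0`) satisfies `D* q = 0` and `D q = 0`, because
`(Δ q, q) = (D* q, D* q) + (D q, D q)` is a sum of positive elements of `A`. If `u = D v`, the
parametrix gives `D v = Δ w + p (D v)` with `p (D v)` harmonic, hence orthogonal both to `D v`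
and (`Δ` being self-adjoint) to `Δ w`, hence zero. Conversely, if `D u = 0` and `p u = 0`, then
`u = Δ w = D D* w + D* D w`, and `z = D* D w` lies in `Ker D ∩ Rng D*`, so
`(z, z) = (D w, D z) = 0` and `u = D (D* w)`.
-/

/-- A pre-Hilbert module over a unital C*-algebra `A`: a left `A`-module equipped with an
`A`-valued inner product (`A`-linear in the first argument, conjugate-symmetric, positive
definite), whose norm is the one induced by the inner product. -/
class PreHilbertModule (A : Type*) (U : Type*) [CStarAlgebra A] [PartialOrder A]
    [StarOrderedRing A] [NormedAddCommGroup U] [Module A U] extends Inner A U where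
  inner_add_left (x y z : U) : inner (x + y) z = inner x z + inner y z
  inner_smul_left (a : A) (x y : U) : inner (a • x) y = a * inner x y
  star_inner (x y : U) : star (inner x y) = inner y x
  inner_self_nonneg (x : U) : 0 ≤ inner x x
  inner_self_eq_zero (x : U) : inner x x = 0 ↔ x = 0
  norm_eq (x : U) : ‖x‖ = Real.sqrt ‖inner x x‖

namespace PreHilbertModule

variable {A : Type*} [CStarAlgebra A] [PartialOrder A] [StarOrderedRing A]
variable {U V W : Type*} [NormedAddCommGroup U] [Module A U] [PreHilbertModule A U]
  [NormedAddCommGroup V] [Module A V] [PreHilbertModule A V]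
  [NormedAddCommGroup W] [Module A W] [PreHilbertModule A W]

theorem inner_zero_left (y : U) : (inner A (0 : U) y : A) = 0 := by
  simpa using inner_add_left (A := A) (0 : U) 0 y

theorem inner_zero_right (x : U) : (inner A x (0 : U) : A) = 0 := by
  rw [← star_inner, inner_zero_left, star_zero]

theorem inner_add_right (x y z : U) :
    (inner A x (y + z) : A) = inner A x y + inner A x z := by
  rw [← star_inner, inner_add_left, star_add, star_inner, star_inner]

theorem eq_zero_and_eq_zero_of_inner_self_add_inner_self_eq_zero {x : U} {y : V}
    (h : (inner A x x : A) + inner A y y = 0) : x = 0 ∧ y = 0 := by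
  obtain ⟨hx, hy⟩ := (add_eq_zero_iff_of_nonneg (inner_self_nonneg x) (inner_self_nonneg y)).mp h
  exact ⟨(inner_self_eq_zero x).mp hx, (inner_self_eq_zero y).mp hy⟩

variable (A) in
def IsAdjointPair (f : U → V) (f' : V → U) : Prop :=
  ∀ u v, (inner A (f u) v : A) = inner A u (f' v)

namespace IsAdjointPair

variable {f : U → V} {f' : V → U}

theorem symm (hf : IsAdjointPair A f f') : IsAdjointPair A f' f := fun v u => by
  rw [← star_inner, ← hf, star_inner]

theorem comp {g : V → W} {g' : W → V} (hf : IsAdjointPair A f f') (hg : IsAdjointPair A g g') :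
    IsAdjointPair A (g ∘ f) (f' ∘ g') := fun u w => by
  simp only [Function.comp_apply, hg _ w, hf u]

theorem add {g : U → V} {g' : V → U} (hf : IsAdjointPair A f f') (hg : IsAdjointPair A g g') :
    IsAdjointPair A (f + g) (f' + g') := fun u v => by
  simp only [Pi.add_apply, inner_add_left, inner_add_right, hf u, hg u]

theorem eq_zero_of_apply_eq_zero (hf : IsAdjointPair A f f') {v : V} (hv : f (f' v) = 0) :
    f' v = 0 :=
  (inner_self_eq_zero (A := A) _).mp (by rw [← hf, hv, inner_zero_left])

theorem eq_zero_of_apply_eq_add {h : W → V} {h' : V → W} (hf : IsAdjointPair A f f')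
    (hh : IsAdjointPair A h h') {u : U} {w : W} {q : V} (hq : f u = h w + q)
    (hfq : f' q = 0) (hhq : h' q = 0) : q = 0 := by
  refine (inner_self_eq_zero (A := A) q).mp ?_
  have horth : (inner A (f u) q : A) = inner A (h w) q + inner A q q := by
    rw [hq, inner_add_left]
  rwa [hf, hh, hfq, hhq, inner_zero_right, inner_zero_right, zero_add, eq_comm] at horth

theorem eq_zero_and_eq_zero_of_add_eq_zero {T : V → W} {T' : W → V}
    (hf : IsAdjointPair A f f') (hT : IsAdjointPair A T T') {v : V}
    (hv : f (f' v) + T' (T v) = 0) : f' v = 0 ∧ T v = 0 := by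
  refine eq_zero_and_eq_zero_of_inner_self_add_inner_self_eq_zero (A := A) ?_
  rw [← hf, ← hT.symm, ← inner_add_left, hv, inner_zero_left]

end IsAdjointPair

end PreHilbertModule

section Parametrix

open PreHilbertModule

variable {A : Type*} [CStarAlgebra A] [PartialOrder A] [StarOrderedRing A]
variable {U V W : Type*} [NormedAddCommGroup U] [Module A U]
  [NormedAddCommGroup V] [Module A V] [PreHilbertModule A V]
  [NormedAddCommGroup W] [Module A W] [PreHilbertModule A W]
variable {d : U →L[A] V} {d' : V →L[A] U} {e : V →L[A] W} {e' : W →L[A] V} {Δ g p : V →L[A] V}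

theorem ker_inf_ker_le_range_of_parametrix (he : IsAdjointPair A e e') (hed : e.comp d = 0)
    (hΔ : Δ = d.comp d' + e'.comp e) (hb : ContinuousLinearMap.id A V = Δ.comp g + p) :
    LinearMap.ker (e : V →ₗ[A] W) ⊓ LinearMap.ker (p : V →ₗ[A] V) ≤
      LinearMap.range (d : U →ₗ[A] V) := by
  rintro v ⟨hev, hpv⟩
  rw [SetLike.mem_coe, LinearMap.mem_ker, ContinuousLinearMap.coe_coe] at hev hpv
  set w := g v
  have hv : v = d (d' w) + e' (e w) := by simpa [hpv, hΔ] using congr($hb v)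
  have hcoexact : e' (e w) = 0 := by
    refine he.eq_zero_of_apply_eq_zero ?_
    calc e (e' (e w)) = e (d (d' w)) + e (e' (e w)) := by
          rw [← ContinuousLinearMap.comp_apply e d, hed, zero_apply, zero_add]
      _ = 0 := by rw [← map_add, ← hv, hev]
  exact ⟨d' w, by simpa [hcoexact] using hv.symm⟩

variable [PreHilbertModule A U]

theorem isAdjointPair_comp_add_comp (hd : IsAdjointPair A d d') (he : IsAdjointPair A e e') :
    IsAdjointPair A (d.comp d' + e'.comp e) (d.comp d' + e'.comp e) := by
  rw [FunLike.coe_add, ContinuousLinearMap.coe_comp, ContinuousLinearMap.coe_comp]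
  exact (hd.symm.comp hd).add (he.comp he.symm)

theorem range_le_ker_of_parametrix (hd : IsAdjointPair A d d') (he : IsAdjointPair A e e')
    (hΔ : Δ = d.comp d' + e'.comp e) (hb : ContinuousLinearMap.id A V = Δ.comp g + p)
    (hc : Δ.comp p = 0) :
    LinearMap.range (d : U →ₗ[A] V) ≤ LinearMap.ker (p : V →ₗ[A] V) := by
  rintro _ ⟨u, rfl⟩
  have hdecomp : d u = Δ (g (d u)) + p (d u) := congr($hb (d u))
  have hharmonic : Δ (p (d u)) = 0 := congr($hc (d u))
  have hΔsymm : IsAdjointPair A Δ Δ := hΔ ▸ isAdjointPair_comp_add_comp hd he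
  refine hd.eq_zero_of_apply_eq_add hΔsymm hdecomp ?_ hharmonic
  rw [hΔ] at hharmonic
  exact (hd.eq_zero_and_eq_zero_of_add_eq_zero he hharmonic).1

theorem range_eq_ker_inf_ker_of_parametrix (hd : IsAdjointPair A d d')
    (he : IsAdjointPair A e e') (hed : e.comp d = 0) (hΔ : Δ = d.comp d' + e'.comp e)
    (hb : ContinuousLinearMap.id A V = Δ.comp g + p) (hc : Δ.comp p = 0) :
    LinearMap.range (d : U →ₗ[A] V) =
      LinearMap.ker (e : V →ₗ[A] W) ⊓ LinearMap.ker (p : V →ₗ[A] V) := by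
  refine le_antisymm (le_inf ?_ (range_le_ker_of_parametrix hd he hΔ hb hc))
    (ker_inf_ker_le_range_of_parametrix he hed hΔ hb)
  rintro _ ⟨u, rfl⟩
  exact congr($hed u)

end Parametrix

theorem boundaries_eq_ker_inter_ker_and_closed_general
    {A : Type*} [CStarAlgebra A] [PartialOrder A] [StarOrderedRing A]
    {Γ : ℕ → Type*} [∀ i, NormedAddCommGroup (Γ i)] [∀ i, Module A (Γ i)]
    [∀ i, PreHilbertModule A (Γ i)]
    (D : ∀ i, Γ i →L[A] Γ (i + 1)) (Dstar : ∀ i, Γ (i + 1) →L[A] Γ i)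
    (hadj : ∀ i (u : Γ i) (v : Γ (i + 1)), (inner A (D i u) v : A) = inner A u (Dstar i v))
    (hcomplex : ∀ i, (D (i + 1)).comp (D i) = 0)
    -- the associated Laplacians (with `D_{-1} := 0`)
    (Δ : ∀ i, Γ i →L[A] Γ i)
    (hΔ : ∀ i, Δ (i + 1) = (D i).comp (Dstar i) + (Dstar (i + 1)).comp (D (i + 1)))
    -- the complex is parametrix possessing
    (g p : ∀ i, Γ i →L[A] Γ i)
    (hb : ∀ i, ContinuousLinearMap.id A (Γ i) = (Δ i).comp (g i) + p i)
    (hc : ∀ i, (Δ i).comp (p i) = 0) :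
    ∀ i, LinearMap.range (D i : Γ i →ₗ[A] Γ (i + 1)) =
        LinearMap.ker (D (i + 1) : Γ (i + 1) →ₗ[A] Γ (i + 1 + 1)) ⊓
          LinearMap.ker (p (i + 1) : Γ (i + 1) →ₗ[A] Γ (i + 1)) ∧
      IsClosed (LinearMap.range (D i : Γ i →ₗ[A] Γ (i + 1)) : Set (Γ (i + 1))) := by
  intro i
  have hrange := range_eq_ker_inf_ker_of_parametrix (hadj i) (hadj (i + 1)) (hcomplex i) (hΔ i)
    (hb (i + 1)) (hc (i + 1))
  refine ⟨hrange, ?_⟩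
  rw [hrange, Submodule.coe_inf]
  exact (D (i + 1)).isClosed_ker.inter (p (i + 1)).isClosed_ker

/-- in a parametrix possessing complex of pre-Hilbert `A`-modules, for each
`i ≥ 1` the module of boundaries satisfies `Rng D_{i-1} = Ker D_i ∩ Ker p_i`; in particular
`Rng D_{i-1}` is a closed subspace of `Γ^i`, being an intersection of kernels of continuous
maps. -/
theorem boundaries_eq_ker_inter_ker_and_closed
    {A : Type*} [CStarAlgebra A] [PartialOrder A] [StarOrderedRing A]
    {Γ : ℕ → Type*} [∀ i, NormedAddCommGroup (Γ i)] [∀ i, Module A (Γ i)]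
    [∀ i, PreHilbertModule A (Γ i)]
    (D : ∀ i, Γ i →L[A] Γ (i + 1)) (Dstar : ∀ i, Γ (i + 1) →L[A] Γ i)
    (hadj : ∀ i (u : Γ i) (v : Γ (i + 1)), (inner A (D i u) v : A) = inner A u (Dstar i v))
    (hcomplex : ∀ i, (D (i + 1)).comp (D i) = 0)
    -- the associated Laplacians (with `D_{-1} := 0`)
    (Δ : ∀ i, Γ i →L[A] Γ i)
    (hΔ0 : Δ 0 = (Dstar 0).comp (D 0))
    (hΔ : ∀ i, Δ (i + 1) = (D i).comp (Dstar i) + (Dstar (i + 1)).comp (D (i + 1)))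
    -- the complex is parametrix possessing
    (g p : ∀ i, Γ i →L[A] Γ i)
    (ha : ∀ i, ContinuousLinearMap.id A (Γ i) = (g i).comp (Δ i) + p i)
    (hb : ∀ i, ContinuousLinearMap.id A (Γ i) = (Δ i).comp (g i) + p i)
    (hc : ∀ i, (Δ i).comp (p i) = 0) :
    ∀ i, LinearMap.range (D i : Γ i →ₗ[A] Γ (i + 1)) =
        LinearMap.ker (D (i + 1) : Γ (i + 1) →ₗ[A] Γ (i + 1 + 1)) ⊓
          LinearMap.ker (p (i + 1) : Γ (i + 1) →ₗ[A] Γ (i + 1)) ∧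
      IsClosed (LinearMap.range (D i : Γ i →ₗ[A] Γ (i + 1)) : Set (Γ (i + 1))) :=
  boundaries_eq_ker_inter_ker_and_closed_general D Dstar hadj hcomplex Δ hΔ g p hb hc
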